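/- arXiv:0906.3069 — 3 statements merged into one kernel-verified Lean document; each statement's English description precedes it below -/
import Mathlib

section
/- Let k be a field, n ≥ 1, and let (X^g)_{g∈G} be a good connected grading of M_n(k) by a group G. Let F_{n−1} be the free group on generators s_1,…,s_{n−1}, and for j > i set w(j,i) = s_{j−1}⋯s_i ∈ F_{n−1}, w(i,j) = w(j,i)^{-1}, and w(i,i) = 1. Then the group homomorphism φ : F_{n−1} → G determined by φ(s_i) = deg E_{i+1,i} is surjective, and for every g ∈ G the homogeneous component X^g equals the k-linear span of the elementary matrices {E_{ji} : φ(w(j,i)) = g}. In other words, every good connected G-grading of M_n(k) is the quotient (pushforward along a surjective group homomorphism) of the canonical good F_{n−1}-grading. -/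
open Matrix

/-- Cumulative product: `degAux m j = m (j-1) * m (j-2) * ⋯ * m 0`. -/
def degAux {G : Type*} [Group G] (m : ℕ → G) : ℕ → G
  | 0 => 1
  | (j + 1) => m j * degAux m j

/-- The word `w(j,i) = s_{j-1}⋯s_i ∈ F_{n-1}` (with `w(i,j) = w(j,i)⁻¹` and `w(i,i) = 1`),
expressed as `W j * (W i)⁻¹` where `W j = s_{j-1}⋯s_0`. -/
def freeW (n : ℕ) (j i : ℕ) : FreeGroup (Fin (n - 1)) :=
  degAux (fun t => if h : t < n - 1 then FreeGroup.of ⟨t, h⟩ else 1) j *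
    (degAux (fun t => if h : t < n - 1 then FreeGroup.of ⟨t, h⟩ else 1) i)⁻¹

/-!
Since `E_{ji} E_{il} = E_{jl} ≠ 0` and the components of a grading are independent, the degrees
`d j i = deg E_{ji}` satisfy `d j i * d i l = d j l`. Hence `d j i = d j 0 * (d i 0)⁻¹`, and
`d j 0` is the telescoping product of the degrees `d (t+1) t` of the subdiagonal matrices, i.e.
the image of `W j` under `φ`; so `φ (w(j,i)) = d j i`. The spans `S g` of the elementary matrices
of degree `g` therefore satisfy `S g ≤ X g` and together span `M_n(k)`; by independence of the
`X g` and the modular law this forces `S g = X g`. Finally a `g ∉ range φ` has `X g = S g = ⊥`,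
so connectedness makes `φ` surjective.
-/

theorem iSupIndep.eq_of_le_of_le_iSup {α ι : Type*} [CompleteLattice α] [IsModularLattice α]
    {X S : ι → α} (hX : iSupIndep X) (hle : ∀ j, S j ≤ X j) {i : ι}
    (hsup : X i ≤ ⨆ j, S j) : S i = X i := by
  refine le_antisymm (hle i) (le_of_eq ?_)
  have hrest : (⨆ (j) (_ : j ≠ i), S j) ⊓ X i = ⊥ :=
    eq_bot_iff.2 <| (inf_le_inf_right _ (iSup₂_mono fun j _ => hle j)).trans
      (hX i).symm.le_bot
  calc X i = (S i ⊔ ⨆ (j) (_ : j ≠ i), S j) ⊓ X i := by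
        rw [← iSup_split_single, inf_eq_right.2 hsup]
    _ = S i := by rw [sup_inf_assoc_of_le _ (hle i), hrest, sup_bot_eq]

theorem iSupIndep.eq_of_mem_of_mem {R M ι : Type*} [Semiring R] [AddCommMonoid M] [Module R M]
    {X : ι → Submodule R M} (hX : iSupIndep X) {g h : ι} {x : M}
    (hg : x ∈ X g) (hh : x ∈ X h) (hx : x ≠ 0) : g = h := by
  by_contra hne
  exact hx (Submodule.disjoint_def.1 (hX.pairwiseDisjoint hne) x hg hh)

theorem map_degAux {G H : Type*} [Group G] [Group H] (f : G →* H) (m : ℕ → G) (j : ℕ) :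
    f (degAux m j) = degAux (f ∘ m) j := by
  induction j with
  | zero => exact f.map_one
  | succ j ih => rw [degAux, degAux, f.map_mul, ih, Function.comp_apply]

section Cocycle

variable {G : Type*} [Group G] {n : ℕ} {d : Fin n → Fin n → G}

theorem cocycle_eq_mul_inv (hd : ∀ j i l, d j i * d i l = d j l) (j i l : Fin n) :
    d j i = d j l * (d i l)⁻¹ := by
  rw [eq_mul_inv_iff_mul_eq, hd]

theorem degAux_eq_of_cocycle (hd : ∀ j i l, d j i * d i l = d j l) {m : ℕ → G}
    (hm : ∀ t (ht : t + 1 < n), m t = d ⟨t + 1, ht⟩ ⟨t, by omega⟩) :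
    ∀ j (hj : j < n), degAux m j = d ⟨j, hj⟩ ⟨0, by omega⟩
  | 0, h0 => (mul_eq_left.1 (hd ⟨0, h0⟩ ⟨0, h0⟩ ⟨0, h0⟩)).symm
  | j + 1, hj => by rw [degAux, degAux_eq_of_cocycle hd hm j (by omega), hm j hj, hd]

end Cocycle

section ElementarySpan

variable (k : Type*) [Semiring k] {m G : Type*} [DecidableEq m]

def elementarySpan (deg : m → m → G) (g : G) : Submodule k (Matrix m m k) :=
  Submodule.span k {M | ∃ i j : m, deg j i = g ∧ M = Matrix.single j i (1 : k)}

variable {k}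

theorem iSup_elementarySpan [Finite m] (deg : m → m → G) :
    ⨆ g, elementarySpan k deg g = ⊤ := by
  refine eq_top_iff.2 fun M _ =>
    Matrix.induction_on' M (zero_mem _) (fun _ _ => add_mem) fun j i a => ?_
  rw [show single j i a = a • single j i (1 : k) by rw [smul_single, smul_eq_mul, mul_one]]
  exact Submodule.smul_mem _ _ <|
    Submodule.mem_iSup_of_mem (deg j i) (Submodule.subset_span ⟨i, j, rfl, rfl⟩)

theorem elementarySpan_le {X : G → Submodule k (Matrix m m k)} {deg : m → m → G}
    (hd : ∀ i j, Matrix.single j i (1 : k) ∈ X (deg j i)) (g : G) :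
    elementarySpan k deg g ≤ X g :=
  Submodule.span_le.2 fun _ ⟨i, j, hij, hM⟩ => hM ▸ hij ▸ hd i j

theorem elementarySpan_eq_bot {deg : m → m → G} {g : G} (hg : ∀ i j, deg j i ≠ g) :
    elementarySpan k deg g = ⊥ :=
  Submodule.span_eq_bot.2 fun _ ⟨i, j, hij, _⟩ => absurd hij (hg i j)

end ElementarySpan

section Grading

variable {k : Type*} [Field k] {n : ℕ} {G : Type*} [Group G]
  {X : G → Submodule k (Matrix (Fin n) (Fin n) k)} {d : Fin n → Fin n → G}

theorem single_one_ne_zero (j i : Fin n) : Matrix.single j i (1 : k) ≠ 0 := fun h => by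
  simpa using congrFun (congrFun h j) i

theorem grading_degree_mul (hind : iSupIndep X) (hmul : ∀ g h, X g * X h ≤ X (g * h))
    (hd : ∀ i j : Fin n, Matrix.single j i (1 : k) ∈ X (d j i)) (j i l : Fin n) :
    d j i * d i l = d j l := by
  have hmem : Matrix.single j l (1 : k) ∈ X (d j i * d i l) := by
    simpa using hmul _ _ (Submodule.mul_mem_mul (hd i j) (hd l i))
  exact hind.eq_of_mem_of_mem hmem (hd l j) (single_one_ne_zero j l)

end Grading

/-- Every good connected `G`-grading of `M_n(k)` is the quotient of the canonical good
`F_{n−1}`-grading: the homomorphism `φ : F_{n−1} → G` with `φ(s_i) = deg E_{i+1,i}` is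
surjective, and each homogeneous component `X^g` is the span of the elementary matrices
`E_{ji}` with `φ(w(j,i)) = g`. -/
theorem stmt4 (k : Type*) [Field k] (n : ℕ) (G : Type*) [Group G]
    (X : G → Submodule k (Matrix (Fin n) (Fin n) k))
    (hind : iSupIndep X)
    (hmul : ∀ g h, X g * X h ≤ X (g * h))
    (d : Fin n → Fin n → G)
    (hd : ∀ i j : Fin n, Matrix.single j i (1 : k) ∈ X (d j i))
    (hconn : Subgroup.closure {g | X g ≠ ⊥} = ⊤) :
    ∃ φ : FreeGroup (Fin (n - 1)) →* G,
      (∀ t : Fin (n - 1),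
        φ (FreeGroup.of t) =
          d ⟨(t : ℕ) + 1, by have := t.isLt; omega⟩ ⟨(t : ℕ), by have := t.isLt; omega⟩) ∧
      Function.Surjective φ ∧
      (∀ g : G, X g = Submodule.span k
        {M | ∃ i j : Fin n, φ (freeW n (j : ℕ) (i : ℕ)) = g ∧
          M = Matrix.single j i (1 : k)}) := by
  have hcoc := grading_degree_mul hind hmul hd
  set φ := FreeGroup.lift fun t : Fin (n - 1) => d ⟨t + 1, by omega⟩ ⟨t, by omega⟩
  have hφW (j : ℕ) (hj : j < n) : φ (degAux (fun t => if h : t < n - 1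
      then FreeGroup.of ⟨t, h⟩ else 1) j) = d ⟨j, hj⟩ ⟨0, by omega⟩ := by
    rw [map_degAux]
    exact degAux_eq_of_cocycle hcoc (fun t ht => by simp [φ, show t < n - 1 by omega]) j hj
  have hφw (i j : Fin n) : φ (freeW n j i) = d j i := by
    rw [freeW, map_mul, map_inv, hφW _ j.isLt, hφW _ i.isLt, ← cocycle_eq_mul_inv hcoc]
  have hdφ (i j : Fin n) : Matrix.single j i (1 : k) ∈ X (φ (freeW n j i)) :=
    hφw i j ▸ hd i j
  have hXφ (g : G) : X g = elementarySpan k (fun j i : Fin n => φ (freeW n j i)) g :=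
    (hind.eq_of_le_of_le_iSup (elementarySpan_le hdφ)
      (by rw [iSup_elementarySpan]; exact le_top)).symm
  refine ⟨φ, fun t => FreeGroup.lift_apply_of, ?_, hXφ⟩
  rw [← MonoidHom.range_eq_top, eq_top_iff, ← hconn, Subgroup.closure_le]
  intro g hg
  by_contra hgφ
  exact hg (hXφ g ▸ elementarySpan_eq_bot fun i j hij => hgφ ⟨_, hij⟩)
end

section
/- Let p be a prime, k a field of characteristic p, and A = k[x]/(x^p). Let (X^g)_{g∈G} be a connected grading of A by a group G, and suppose there exists an invertible homogeneous element a ∈ X^s with s ≠ 1. Then G is cyclic of order p, and the grading is fine: every homogeneous component X^g is one-dimensional (so the support equals G). -/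
/-!
By Frobenius, `u ^ p` is a nonzero scalar for every unit `u` of `k[x]/(x^p)`. Since scalars are
homogeneous of degree `1`, the degree `s` of the homogeneous unit `a` satisfies `s ^ p = 1`, so
`s` has order `p`. The powers `a ^ i` are nonzero homogeneous elements of the `p` distinct degrees
`s ^ i`, and a grading of a `p`-dimensional algebra has at most `p` nonzero components, so the
support is exactly `⟨s⟩`; connectedness gives `G = ⟨s⟩ ≅ ℤ/p`. Finally `p` nonzero components
add up to dimension `p`, so each is a line.
-/

open Polynomial

section TruncatedPolynomial

variable (k : Type*) [Field k]

theorem finrank_quotient_span_X_pow (n : ℕ) :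
    Module.finrank k (k[X] ⧸ Ideal.span {(X : k[X]) ^ n}) = n := by
  rw [finrank_quotient_span_eq_natDegree, natDegree_X_pow]

variable {n : ℕ} [NeZero n]

instance : FiniteDimensional k (k[X] ⧸ Ideal.span {(X : k[X]) ^ n}) :=
  Module.finite_of_finrank_pos (by rw [finrank_quotient_span_X_pow]; exact Nat.pos_of_neZero n)

instance : Nontrivial (k[X] ⧸ Ideal.span {(X : k[X]) ^ n}) :=
  Module.nontrivial_of_finrank_pos (R := k)
    (by rw [finrank_quotient_span_X_pow]; exact Nat.pos_of_neZero n)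

end TruncatedPolynomial

theorem exists_pow_char_eq_algebraMap {k : Type*} [Field k] (p : ℕ) [Fact p.Prime] [CharP k p]
    (a : k[X] ⧸ Ideal.span {(X : k[X]) ^ p}) : ∃ c : k, a ^ p = algebraMap k _ c := by
  obtain ⟨f, rfl⟩ := Ideal.Quotient.mk_surjective a
  obtain ⟨g, hg⟩ : X ∣ f - C (f.coeff 0) := X_dvd_iff.mpr (by simp)
  have hf : f ^ p = C (f.coeff 0 ^ p) + X ^ p * g ^ p := by
    rw [C_pow, ← mul_pow, ← hg, ← add_pow_char, add_sub_cancel]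
  refine ⟨f.coeff 0 ^ p, ?_⟩
  rw [← map_pow, hf, map_add, Ideal.Quotient.eq_zero_iff_mem.mpr
    (Ideal.mul_mem_right _ _ (Ideal.mem_span_singleton_self _)), add_zero]
  rfl

section Grading

variable {R A G : Type*} [CommSemiring R] [Semiring A] [Algebra R A] {X : G → Submodule R A}

theorem pow_mem_of_mul_le [Monoid G] (hmul : ∀ g h, X g * X h ≤ X (g * h)) {a : A} {s : G}
    (ha : a ∈ X s) {n : ℕ} (hn : n ≠ 0) : a ^ n ∈ X (s ^ n) := by
  induction n with
  | zero => exact absurd rfl hn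
  | succ n ih =>
    rcases eq_or_ne n 0 with rfl | hn
    · simpa using ha
    · rw [pow_succ, pow_succ]
      exact hmul _ _ (Submodule.mul_mem_mul (ih hn) ha)

theorem zpowers_subset_support_of_mul_le [Group G] [Nontrivial A]
    (hmul : ∀ g h, X g * X h ≤ X (g * h)) {a : A} {s : G} (ha : a ∈ X s) (haUnit : IsUnit a)
    (hs : IsOfFinOrder s) : (Subgroup.zpowers s : Set G) ⊆ {g | X g ≠ ⊥} := by
  intro g hg
  obtain ⟨m, rfl⟩ := hs.mem_powers_iff_mem_zpowers.mpr hg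
  have hm : s ^ m = s ^ (m + orderOf s) := by rw [pow_add, pow_orderOf_eq_one, mul_one]
  change X (s ^ m) ≠ ⊥
  rw [hm, Submodule.ne_bot_iff]
  exact ⟨_, pow_mem_of_mul_le hmul ha (by have := hs.orderOf_pos; omega), (haUnit.pow _).ne_zero⟩

theorem iSupIndep.eq_of_mem_of_mem_s7 (hind : iSupIndep X) {g h : G} {x : A} (hx : x ≠ 0)
    (hg : x ∈ X g) (hh : x ∈ X h) : g = h := by
  by_contra hgh
  exact hx (Submodule.disjoint_def.mp (hind.pairwiseDisjoint hgh) x hg hh)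

theorem iSupIndep.eq_one_of_one_mem [LeftCancelMonoid G] [Nontrivial A] (hind : iSupIndep X)
    (hmul : ∀ g h, X g * X h ≤ X (g * h)) {g : G} (h1 : (1 : A) ∈ X g) : g = 1 := by
  have h11 : (1 : A) ∈ X (g * g) := by simpa using hmul g g (Submodule.mul_mem_mul h1 h1)
  exact mul_eq_left.mp (hind.eq_of_mem_of_mem_s7 one_ne_zero h11 h1)

end Grading

section FiniteDimensional

variable {k A G : Type*} [Field k]

theorem iSupIndep.ncard_support_le_finrank [AddCommGroup A] [Module k A] [FiniteDimensional k A]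
    {X : G → Submodule k A} (hind : iSupIndep X) :
    {g | X g ≠ ⊥}.Finite ∧ {g | X g ≠ ⊥}.ncard ≤ Module.finrank k A := by
  let := hind.fintypeNeBotOfFiniteDimensional
  exact ⟨Finite.of_fintype {g // X g ≠ ⊥}, by
    rw [← Nat.card_coe_set_eq, Set.coe_ofPred, Nat.card_eq_fintype_card]
    exact hind.subtype_ne_bot_le_finrank⟩

theorem DirectSum.IsInternal.sum_finrank_eq [AddCommGroup A] [Module k A] [FiniteDimensional k A]
    [Fintype G] [DecidableEq G] {X : G → Submodule k A} (hX : DirectSum.IsInternal X) :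
    ∑ g, Module.finrank k (X g) = Module.finrank k A := by
  rw [← Module.finrank_directSum,
    (LinearEquiv.ofBijective (DirectSum.coeLinearMap X) hX).finrank_eq]

theorem iSupIndep.finrank_eq_one_of_card_eq_finrank [AddCommGroup A] [Module k A]
    [FiniteDimensional k A] [Finite G] {X : G → Submodule k A} (hind : iSupIndep X)
    (hsup : ⨆ g, X g = ⊤) (hX : ∀ g, X g ≠ ⊥) (hcard : Nat.card G = Module.finrank k A)
    (g : G) : Module.finrank k (X g) = 1 := by
  classical
  let := Fintype.ofFinite G
  have hsum : ∑ _g : G, 1 = ∑ g, Module.finrank k (X g) := by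
    rw [(DirectSum.isInternal_submodule_of_iSupIndep_of_iSup_eq_top hind hsup).sum_finrank_eq,
      ← hcard, Finset.sum_const, Finset.card_univ, Nat.card_eq_fintype_card, smul_eq_mul, mul_one]
  refine ((Finset.sum_eq_sum_iff_of_le fun g _ => ?_).mp hsum g (Finset.mem_univ g)).symm
  exact Nat.one_le_iff_ne_zero.mpr (Submodule.finrank_eq_zero.not.mpr (hX g))

variable [Ring A] [Algebra k A] [Nontrivial A] {X : G → Submodule k A}

theorem iSupIndep.pow_eq_one_of_pow_eq_algebraMap [LeftCancelMonoid G] (hind : iSupIndep X)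
    (hmul : ∀ g h, X g * X h ≤ X (g * h)) {a : A} {s : G} (ha : a ∈ X s) (haUnit : IsUnit a)
    {n : ℕ} (hn : n ≠ 0) {c : k} (hc : a ^ n = algebraMap k A c) : s ^ n = 1 := by
  have hc0 : c ≠ 0 := by
    rintro rfl
    exact (haUnit.pow n).ne_zero (by rw [hc, map_zero])
  refine hind.eq_one_of_one_mem hmul ?_
  rw [← Submodule.smul_mem_iff _ hc0, ← Algebra.algebraMap_eq_smul_one, ← hc]
  exact pow_mem_of_mul_le hmul ha hn

theorem iSupIndep.support_eq_zpowers [Group G] [FiniteDimensional k A] (hind : iSupIndep X)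
    (hmul : ∀ g h, X g * X h ≤ X (g * h)) {a : A} {s : G} (ha : a ∈ X s) (haUnit : IsUnit a)
    (hord : orderOf s = Module.finrank k A) : {g | X g ≠ ⊥} = Subgroup.zpowers s := by
  have hs : IsOfFinOrder s := orderOf_pos_iff.mp (hord ▸ Module.finrank_pos)
  obtain ⟨hfin, hcard⟩ := hind.ncard_support_le_finrank
  refine (Set.eq_of_subset_of_ncard_le (zpowers_subset_support_of_mul_le hmul ha haUnit hs)
    ?_ hfin).symm
  rwa [← Nat.card_coe_set_eq (Subgroup.zpowers s : Set G), SetLike.coe_sort_coe,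
    Nat.card_zpowers, hord]

end FiniteDimensional

/-- Let `p` be a prime, `k` a field of characteristic `p` and `A = k[x]/(x^p)`.  If a
connected grading `(X^g)_{g∈G}` of `A` has an invertible homogeneous element `a ∈ X^s` with
`s ≠ 1`, then `G` is cyclic of order `p` and the grading is fine: every homogeneous
component is one-dimensional, so the support is all of `G`. -/
theorem stmt7 (p : ℕ) (hp : p.Prime) (k : Type*) [Field k] (hchar : CharP k p)
    (G : Type*) [Group G]
    (X : G → Submodule k (Polynomial k ⧸ (Ideal.span {Polynomial.X ^ p} : Ideal (Polynomial k))))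
    (hind : iSupIndep X) (hsup : (⨆ g, X g) = ⊤)
    (hmul : ∀ g h, X g * X h ≤ X (g * h))
    (hconn : Subgroup.closure {g | X g ≠ ⊥} = ⊤)
    (s : G) (hs : s ≠ 1)
    (a : Polynomial k ⧸ (Ideal.span {Polynomial.X ^ p} : Ideal (Polynomial k)))
    (ha : a ∈ X s) (haUnit : IsUnit a) :
    IsCyclic G ∧ Nat.card G = p ∧
    (∀ g, Module.finrank k (X g) = 1) ∧
    {g | X g ≠ ⊥} = Set.univ := by
  have : Fact p.Prime := ⟨hp⟩
  obtain ⟨c, hc⟩ := exists_pow_char_eq_algebraMap p a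
  have hord : orderOf s = p :=
    orderOf_eq_prime (hind.pow_eq_one_of_pow_eq_algebraMap hmul ha haUnit hp.ne_zero hc) hs
  have hsupp : {g | X g ≠ ⊥} = Subgroup.zpowers s :=
    hind.support_eq_zpowers hmul ha haUnit (hord.trans (finrank_quotient_span_X_pow k p).symm)
  have htop : Subgroup.zpowers s = ⊤ := by rwa [hsupp, Subgroup.closure_eq] at hconn
  have hcardG : Nat.card G = p := by rw [← hord, ← Nat.card_zpowers, htop, Subgroup.card_top]
  have hsuppG : {g | X g ≠ ⊥} = Set.univ := by rw [hsupp, htop, Subgroup.coe_top]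
  have : Finite G := Nat.finite_of_card_ne_zero (hcardG ▸ hp.ne_zero)
  refine ⟨isCyclic_iff_exists_zpowers_eq_top.mpr ⟨s, htop⟩, hcardG, ?_, hsuppG⟩
  exact hind.finrank_eq_one_of_card_eq_finrank hsup (Set.eq_univ_iff_forall.mp hsuppG)
    (hcardG.trans (finrank_quotient_span_X_pow k p).symm)
end

section
/- Let p be a prime and k an algebraically closed field of characteristic zero. Let (X^g)_{g∈G} be a connected grading of the matrix algebra M_p(k) by a group G such that every homogeneous component X^g has dimension at most 1 (a fine grading). Then G is isomorphic to C_p × C_p = (ZMod p) × (ZMod p), and every nonzero homogeneous component is exactly one-dimensional with support all of G. -/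
/-!
The unit of a `G`-graded algebra is homogeneous of degree `1`. In a fine grading of a
finite-dimensional algebra, a homogeneous component either has all its nonzero elements invertible
or contains no unit at all, and the components of the second kind span a two-sided ideal which
misses `1`. In the simple algebra `M_p(k)` that ideal is zero, so every nonzero component is
spanned by a unit. Products of units are nonzero, so the support is a finite submonoid of `G`,
hence a subgroup, hence all of `G` by connectedness, and `|G| = dim M_p(k) = p²`. A grading by a
cyclic group with invertible homogeneous generators makes the algebra commutative, which `M_p(k)`
is not; so `G` is a non-cyclic group of order `p²`, i.e. `C_p × C_p`.
-/

open Module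

theorem Submodule.eq_span_singleton_of_finrank_le_one {k V : Type*} [Field k] [AddCommGroup V]
    [Module k V] [FiniteDimensional k V] {W : Submodule k V} (hW : finrank k W ≤ 1) {x : V}
    (hx : x ∈ W) (hx0 : x ≠ 0) : W = k ∙ x := by
  refine (Submodule.eq_of_le_of_finrank_le ?_ ?_).symm
  · rwa [Submodule.span_le, Set.singleton_subset_iff]
  · rwa [finrank_span_singleton hx0]

theorem Submodule.isUnit_of_mem_of_finrank_le_one {k A : Type*} [Field k] [Ring A] [Algebra k A]
    [FiniteDimensional k A] {W : Submodule k A} (hW : finrank k W ≤ 1) {z y : A} (hz : z ∈ W)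
    (hzu : IsUnit z) (hy : y ∈ W) (hy0 : y ≠ 0) : IsUnit y := by
  have : Nontrivial A := nontrivial_of_ne y 0 hy0
  rw [eq_span_singleton_of_finrank_le_one hW hz hzu.ne_zero, mem_span_singleton] at hy
  obtain ⟨c, rfl⟩ := hy
  have hc : c ≠ 0 := by rintro rfl; exact hy0 (zero_smul k z)
  rw [Algebra.smul_def]
  exact (hc.isUnit.map (algebraMap k A)).mul hzu

theorem Submonoid.eq_top_of_subgroupClosure_eq_top {G : Type*} [Group G] {M : Submonoid G}
    [Finite M] (h : Subgroup.closure (M : Set G) = ⊤) : M = ⊤ := by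
  have hfin : ∀ x ∈ (M : Set G), IsOfFinOrder x := fun x hx => by
    by_contra hinf
    exact not_injective_infinite_finite (fun n : ℕ => (⟨x ^ n, M.pow_mem hx n⟩ : M))
      fun m n hmn => injective_pow_iff_not_isOfFinOrder.mpr hinf (congrArg Subtype.val hmn)
  have := Subgroup.closure_toSubmonoid_of_isOfFinOrder hfin
  rwa [h, Submonoid.closure_eq, eq_comm] at this

theorem Matrix.not_commute_single {n R : Type*} [Fintype n] [DecidableEq n] [Semiring R]
    [Nontrivial R] {i j : n} (hij : i ≠ j) : ¬Commute (single i i (1 : R)) (single i j 1) := by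
  intro h
  have := congrFun (congrFun h.eq i) j
  simp [hij] at this

open scoped IsMulCommutative in
theorem nonempty_mulEquiv_zmod_prod_of_card_eq_prime_sq {G : Type*} [Group G] {p : ℕ}
    (hp : p.Prime) (hcard : Nat.card G = p ^ 2) (hcyc : ¬IsCyclic G) :
    Nonempty (G ≃* Multiplicative (ZMod p × ZMod p)) := by
  have hexp : Monoid.exponent G = p := (not_isCyclic_iff_exponent_eq_prime hp hcard).mp hcyc
  have : Fact p.Prime := ⟨hp⟩
  have : Finite G := Nat.finite_of_card_ne_zero (by simp [hcard, hp.ne_zero])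
  have : Fintype G := Fintype.ofFinite G
  have : IsMulCommutative G := IsPGroup.isMulCommutative_of_card_eq_prime_sq hcard
  have : Module (ZMod p) (Additive G) := AddCommGroup.zmodModule fun a => by
    rw [← hexp]
    exact congrArg Additive.ofMul (Monoid.pow_exponent_eq_one a.toMul)
  have hfinrank : finrank (ZMod p) (Additive G) = finrank (ZMod p) (ZMod p × ZMod p) := by
    have hpow := card_eq_pow_finrank (K := ZMod p) (V := Additive G)
    rw [ZMod.card, Fintype.card_eq_nat_card, show Nat.card (Additive G) = p ^ 2 from hcard] at hpow
    rw [Module.finrank_prod, Module.finrank_self, ← Nat.pow_right_injective hp.two_le hpow]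
  obtain ⟨e⟩ := FiniteDimensional.nonempty_linearEquiv_of_finrank_eq hfinrank
  exact ⟨AddEquiv.toMultiplicativeRight e.toAddEquiv⟩

structure IsGrading {k A G : Type*} [CommRing k] [Ring A] [Algebra k A] [Group G]
    (X : G → Submodule k A) : Prop where
  indep : iSupIndep X
  iSup_eq_top : ⨆ g, X g = ⊤
  mul_le : ∀ g h, X g * X h ≤ X (g * h)

def nonunitPart {k A G : Type*} [CommRing k] [Ring A] [Algebra k A]
    (X : G → Submodule k A) : Submodule k A :=
  ⨆ (g) (_ : ∀ x ∈ X g, ¬IsUnit x), X g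

namespace IsGrading

variable {k A G : Type*} [Group G]

section Ring

variable [CommRing k] [Ring A] [Algebra k A] {X : G → Submodule k A} (hX : IsGrading X)
include hX

theorem mul_mem {g h : G} {x y : A} (hx : x ∈ X g) (hy : y ∈ X h) : x * y ∈ X (g * h) :=
  hX.mul_le g h (Submodule.mul_mem_mul hx hy)

theorem induction {motive : A → Prop} (a : A) (mem : ∀ g, ∀ x ∈ X g, motive x)
    (add : ∀ x y, motive x → motive y → motive (x + y)) (zero : motive 0) : motive a :=
  Submodule.iSup_induction X (motive := motive) (by rw [hX.iSup_eq_top]; exact Submodule.mem_top)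
    mem zero add

theorem one_mem : (1 : A) ∈ X 1 := by
  obtain ⟨u, hu, v, hv, huv⟩ : ∃ u ∈ X 1, ∃ v ∈ ⨆ (h) (_ : h ≠ 1), X h, u + v = 1 := by
    rw [← Submodule.mem_sup, ← iSup_split_single, hX.iSup_eq_top]
    exact Submodule.mem_top
  have hright : ∀ g, ∀ x ∈ X g, x * u = x := by
    intro g x hx
    have hxv : x * v ∈ X g := by
      rw [show x * v = x - x * u by rw [eq_sub_iff_add_eq, ← mul_add, add_comm, huv, mul_one]]
      exact sub_mem hx (mul_one g ▸ hX.mul_mem hx hu)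
    have hxv' : x * v ∈ ⨆ (j) (_ : j ≠ g), X j := by
      have : X g * ⨆ (h) (_ : h ≠ 1), X h ≤ ⨆ (j) (_ : j ≠ g), X j := by
        simp only [Submodule.mul_iSup]
        exact iSup₂_le fun h hh =>
          (hX.mul_le g h).trans (le_iSup₂_of_le (g * h) (by simpa using hh) le_rfl)
      exact this (Submodule.mul_mem_mul hx hv)
    have hzero : x * v = 0 := Submodule.disjoint_def.mp (hX.indep g) _ hxv hxv'
    rw [← add_zero (x * u), ← hzero, ← mul_add, huv, mul_one]
  have hu1 : u = 1 := by
    simpa using hX.induction (motive := fun a => a * u = a) 1 hright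
      (fun a b ha hb => by rw [add_mul, ha, hb]) (zero_mul u)
  exact hu1 ▸ hu

theorem pow_mem {g : G} {x : A} (hx : x ∈ X g) (n : ℕ) : x ^ n ∈ X (g ^ n) := by
  induction n with
  | zero => simpa using hX.one_mem
  | succ n ih => simpa only [pow_succ] using hX.mul_mem ih hx

end Ring

section Fine

variable [Field k] [Ring A] [Algebra k A] [FiniteDimensional k A] {X : G → Submodule k A}
  (hX : IsGrading X) (hfine : ∀ g, finrank k (X g) ≤ 1)

omit [Group G] in
include hfine in
theorem mem_nonunitPart {g : G} {x : A} (hx : x ∈ X g) (hxu : ¬IsUnit x) : x ∈ nonunitPart X := by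
  by_cases hx0 : x = 0
  · rw [hx0]
    exact zero_mem _
  · refine Submodule.mem_iSup_of_mem g (Submodule.mem_iSup_of_mem (fun z hz hzu => hxu ?_) hx)
    exact Submodule.isUnit_of_mem_of_finrank_le_one (hfine g) hz hzu hx hx0

include hX hfine

theorem mul_nonunitPart_le (h : G) : X h * nonunitPart X ≤ nonunitPart X := by
  -- a finite-dimensional algebra is Dedekind-finite, so a factor of a unit is a unit
  have := IsArtinianRing.of_finite k A
  simp only [nonunitPart, Submodule.mul_iSup]
  refine iSup₂_le fun g hg => Submodule.mul_le.mpr fun a ha y hy => ?_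
  exact mem_nonunitPart hfine (hX.mul_mem ha hy) fun hu => hg y hy (isUnit_of_mul_isUnit_right hu)

theorem nonunitPart_mul_le (h : G) : nonunitPart X * X h ≤ nonunitPart X := by
  have := IsArtinianRing.of_finite k A
  simp only [nonunitPart, Submodule.iSup_mul]
  refine iSup₂_le fun g hg => Submodule.mul_le.mpr fun y hy a ha => ?_
  exact mem_nonunitPart hfine (hX.mul_mem hy ha) fun hu => hg y hy (isUnit_of_mul_isUnit_left hu)

theorem nonunitPart_eq_bot [IsSimpleRing A] : nonunitPart X = ⊥ := by
  have hleft : ∀ a, ∀ y ∈ nonunitPart X, a * y ∈ nonunitPart X := fun a y hy =>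
    hX.induction (motive := fun a => a * y ∈ nonunitPart X) a
      (fun h x hx => hX.mul_nonunitPart_le hfine h (Submodule.mul_mem_mul hx hy))
      (fun a b ha hb => by rw [add_mul]; exact add_mem ha hb) (by simp)
  have hright : ∀ a, ∀ y ∈ nonunitPart X, y * a ∈ nonunitPart X := fun a y hy =>
    hX.induction (motive := fun a => y * a ∈ nonunitPart X) a
      (fun h x hx => hX.nonunitPart_mul_le hfine h (Submodule.mul_mem_mul hy hx))
      (fun a b ha hb => by rw [mul_add]; exact add_mem ha hb) (by simp)
  let I : TwoSidedIdeal A := .mk' (nonunitPart X) (zero_mem _) add_mem neg_mem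
    (fun {a y} hy => hleft a y hy) (fun {y a} hy => hright a y hy)
  have hone : (1 : A) ∉ nonunitPart X := fun h1 =>
    one_ne_zero <| Submodule.disjoint_def.mp
      (hX.indep.disjoint_biSup (y := {g | ∀ x ∈ X g, ¬IsUnit x}) fun h => h 1 hX.one_mem isUnit_one)
      1 hX.one_mem h1
  have hI : I = ⊥ := (IsSimpleOrder.eq_bot_or_eq_top I).resolve_right fun htop =>
    hone ((TwoSidedIdeal.mem_mk' ..).mp (htop ▸ TwoSidedIdeal.mem_top (x := 1)))
  refine (Submodule.eq_bot_iff _).mpr fun y hy => ?_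
  have hyI : y ∈ I := (TwoSidedIdeal.mem_mk' ..).mpr hy
  rwa [hI, TwoSidedIdeal.mem_bot] at hyI

theorem exists_isUnit_mem [IsSimpleRing A] {g : G} (hg : X g ≠ ⊥) : ∃ x ∈ X g, IsUnit x := by
  by_contra! h
  refine hg (eq_bot_iff.mpr ?_)
  rw [← hX.nonunitPart_eq_bot hfine]
  exact le_iSup₂_of_le g h le_rfl

theorem natCard_eq_finrank (hne : ∀ g, X g ≠ ⊥) : Nat.card G = finrank k A := by
  choose x hx hx0 using fun g => (Submodule.ne_bot_iff (X g)).mp (hne g)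
  have hspan : ⊤ ≤ Submodule.span k (Set.range x) := by
    rw [← hX.iSup_eq_top]
    refine iSup_le fun g => ?_
    rw [Submodule.eq_span_singleton_of_finrank_le_one (hfine g) (hx g) (hx0 g)]
    exact Submodule.span_mono (Set.singleton_subset_iff.mpr ⟨g, rfl⟩)
  exact (finrank_eq_nat_card_basis (Basis.mk (hX.indep.linearIndependent X hx hx0) hspan)).symm

theorem commute_of_isCyclic [IsCyclic G] [Finite G] [Nontrivial A]
    (hunit : ∀ g, ∃ x ∈ X g, IsUnit x) (a b : A) : Commute a b := by
  obtain ⟨g, hg⟩ := IsCyclic.exists_monoid_generator (α := G)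
  obtain ⟨x, hx, hxu⟩ := hunit g
  have hadjoin : ∀ c : A, c ∈ Algebra.adjoin k {x} := fun c =>
    hX.induction (motive := (· ∈ Algebra.adjoin k {x})) c (fun h y hy => by
        obtain ⟨n, rfl⟩ := Submonoid.mem_powers_iff _ _ |>.mp (hg h)
        rw [Submodule.eq_span_singleton_of_finrank_le_one (hfine _) (hX.pow_mem hx n)
          (hxu.pow n).ne_zero, Submodule.mem_span_singleton] at hy
        obtain ⟨c, rfl⟩ := hy
        exact Subalgebra.smul_mem _
          (Subalgebra.pow_mem _ (Algebra.self_mem_adjoin_singleton k x) n) c)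
      (fun _ _ => add_mem) (zero_mem _)
  exact Algebra.commute_of_mem_adjoin_singleton_of_commute (hadjoin b)
    (Algebra.commute_of_mem_adjoin_self (hadjoin a)).symm

end Fine

theorem ne_bot_of_closure_eq_top [Field k] [Ring A] [Algebra k A] [FiniteDimensional k A]
    [Nontrivial A] {X : G → Submodule k A} (hX : IsGrading X)
    (hunit : ∀ g, X g ≠ ⊥ → ∃ x ∈ X g, IsUnit x) (hconn : Subgroup.closure {g | X g ≠ ⊥} = ⊤)
    (g : G) : X g ≠ ⊥ := by
  let S : Submonoid G :=
    { carrier := {g | X g ≠ ⊥}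
      one_mem' := (Submodule.ne_bot_iff _).mpr ⟨1, hX.one_mem, one_ne_zero⟩
      mul_mem' := fun {g h} hg hh => by
        obtain ⟨x, hx, hxu⟩ := hunit g hg
        obtain ⟨y, hy, hyu⟩ := hunit h hh
        exact (Submodule.ne_bot_iff _).mpr ⟨x * y, hX.mul_mem hx hy, (hxu.mul hyu).ne_zero⟩ }
  have : Finite S := @Finite.of_fintype _ hX.indep.fintypeNeBotOfFiniteDimensional
  have hgS : g ∈ S :=
    Submonoid.eq_top_of_subgroupClosure_eq_top (M := S) hconn ▸ Submonoid.mem_top g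
  exact hgS

end IsGrading

theorem stmt14_general (p : ℕ) (hp : p.Prime) (k : Type*) [Field k]
    (G : Type*) [Group G] (X : G → Submodule k (Matrix (Fin p) (Fin p) k))
    (hind : iSupIndep X) (hsup : (⨆ g, X g) = ⊤)
    (hmul : ∀ g h, X g * X h ≤ X (g * h))
    (hconn : Subgroup.closure {g | X g ≠ ⊥} = ⊤)
    (hfine : ∀ g, Module.finrank k (X g) ≤ 1) :
    Nonempty (G ≃* Multiplicative (ZMod p × ZMod p)) ∧
    (∀ g, Module.finrank k (X g) = 1) ∧
    {g | X g ≠ ⊥} = Set.univ := by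
  have hX : IsGrading X := ⟨hind, hsup, hmul⟩
  have : Nonempty (Fin p) := ⟨⟨0, hp.pos⟩⟩
  have hunit : ∀ g, X g ≠ ⊥ → ∃ x ∈ X g, IsUnit x := fun _ => hX.exists_isUnit_mem hfine
  have hne : ∀ g, X g ≠ ⊥ := hX.ne_bot_of_closure_eq_top hunit hconn
  have hcard : Nat.card G = p ^ 2 := by
    rw [hX.natCard_eq_finrank hfine hne, Module.finrank_matrix, Module.finrank_self,
      Fintype.card_fin, sq, mul_one]
  have : Finite G := Nat.finite_of_card_ne_zero (by simp [hcard, hp.ne_zero])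
  have hcyc : ¬IsCyclic G := fun _ =>
    Matrix.not_commute_single (R := k) (i := ⟨0, hp.pos⟩) (j := ⟨1, hp.one_lt⟩) (by simp)
      (hX.commute_of_isCyclic hfine (fun g => hunit g (hne g)) _ _)
  refine ⟨nonempty_mulEquiv_zmod_prod_of_card_eq_prime_sq hp hcard hcyc, fun g => ?_,
    Set.eq_univ_of_forall hne⟩
  exact le_antisymm (hfine g) (Submodule.one_le_finrank_iff.mpr (hne g))

/-- Let `p` be a prime and `k` an algebraically closed field of characteristic zero.  If
`(X^g)_{g∈G}` is a connected fine grading of `M_p(k)` (every homogeneous component of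
dimension at most 1), then `G ≅ C_p × C_p` and every homogeneous component is exactly
one-dimensional, with support all of `G`. -/
theorem stmt14 (p : ℕ) (hp : p.Prime) (k : Type*) [Field k] [IsAlgClosed k] [CharZero k]
    (G : Type*) [Group G] (X : G → Submodule k (Matrix (Fin p) (Fin p) k))
    (hind : iSupIndep X) (hsup : (⨆ g, X g) = ⊤)
    (hmul : ∀ g h, X g * X h ≤ X (g * h))
    (hconn : Subgroup.closure {g | X g ≠ ⊥} = ⊤)
    (hfine : ∀ g, Module.finrank k (X g) ≤ 1) :
    Nonempty (G ≃* Multiplicative (ZMod p × ZMod p)) ∧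
    (∀ g, Module.finrank k (X g) = 1) ∧
    {g | X g ≠ ⊥} = Set.univ :=
  stmt14_general p hp k G X hind hsup hmul hconn hfine
end
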